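/- arXiv:1105.5482 — 3 statements merged into one kernel-verified Lean document; each statement's English description precedes it below -/
import Mathlib

section
/- Let $Y$ be a positive definite real symmetric $2\times 2$ matrix with entries $y, v, y'$ (so $Y = \begin{pmatrix} y & v \\ v & y' \end{pmatrix}$), let $k$ be an integer, and $s \in \mathbb{C}$. Then the matrix-valued Laplace operator $\Omega_{\frac12, k-\frac12} = -4Y\,{}^t(Y\partial_{\bar Z})\partial_Z - 2i(k-\tfrac12)Y\partial_Z + i Y\partial_{\bar Z}$ applied to the function $Z \mapsto (\det Y)^s$ satisfies $\Omega_{\frac12, k-\frac12}\big((\det Y)^s\big) = -s\big(s - (\tfrac32 - k)\big)(\det Y)^s I_2$. In particular, $(\det Y)^s$ lies in the kernel of $\Omega_{\frac12, k-\frac12}$ if and only if $s = 0$ or $s = \tfrac32 - k$. -/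
/-
On functions of `Y = Im Z` alone, `∂_w = -(i/2) ∂_{Im w}` and `∂_w̄ = (i/2) ∂_{Im w}`, so every
first and second Wirtinger derivative of `(det Y)^s` is a multiple of a real partial derivative
of `(y y' - v²)^s`. The first derivatives are again functions of `Y` on the open set
`det Y > 0`, which is what allows differentiating a second time. Collecting terms (in matrix
form: `∂_Z (det Y)^s = -(i/2) s (det Y)^(s-1) adj Y` and `Y adj Y = det Y · I₂`) gives
`Ω_{α,β} (det Y)^s = -s (s - 3/2 + α + β) (det Y)^s I₂`, and `α + β = k` here. The kernel
statement follows by evaluating at `Z = i I₂`, where `det Y = 1`.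
-/

open Finset

/-- Wirtinger derivative `∂_w = ½(∂_a - i ∂_b)` of `f : ℂ → ℂ` at a point. -/
noncomputable def wD (f : ℂ → ℂ) (w : ℂ) : ℂ :=
  (1 / 2) * (fderiv ℝ f w 1 - Complex.I * fderiv ℝ f w Complex.I)

/-- Conjugate Wirtinger derivative `∂_w̄ = ½(∂_a + i ∂_b)`. -/
noncomputable def wDbar (f : ℂ → ℂ) (w : ℂ) : ℂ :=
  (1 / 2) * (fderiv ℝ f w 1 + Complex.I * fderiv ℝ f w Complex.I)

noncomputable def dTau (F : ℂ → ℂ → ℂ → ℂ) : ℂ → ℂ → ℂ → ℂ :=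
  fun τ z τ' => wD (fun w => F w z τ') τ
noncomputable def dZvar (F : ℂ → ℂ → ℂ → ℂ) : ℂ → ℂ → ℂ → ℂ :=
  fun τ z τ' => wD (fun w => F τ w τ') z
noncomputable def dTauP (F : ℂ → ℂ → ℂ → ℂ) : ℂ → ℂ → ℂ → ℂ :=
  fun τ z τ' => wD (fun w => F τ z w) τ'
noncomputable def dTauBar (F : ℂ → ℂ → ℂ → ℂ) : ℂ → ℂ → ℂ → ℂ :=
  fun τ z τ' => wDbar (fun w => F w z τ') τ
noncomputable def dZvarBar (F : ℂ → ℂ → ℂ → ℂ) : ℂ → ℂ → ℂ → ℂ :=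
  fun τ z τ' => wDbar (fun w => F τ w τ') z
noncomputable def dTauPBar (F : ℂ → ℂ → ℂ → ℂ) : ℂ → ℂ → ℂ → ℂ :=
  fun τ z τ' => wDbar (fun w => F τ z w) τ'

/-- The matrix of operators `∂_Z = (∂_τ, ½∂_z; ½∂_z, ∂_τ')`, entrywise. -/
noncomputable def DZop : Fin 2 → Fin 2 → (ℂ → ℂ → ℂ → ℂ) → (ℂ → ℂ → ℂ → ℂ) :=
  fun i j F =>
    if i = 0 then
      (if j = 0 then dTau F else fun τ z τ' => (1 / 2) * dZvar F τ z τ')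
    else
      (if j = 0 then (fun τ z τ' => (1 / 2) * dZvar F τ z τ') else dTauP F)

/-- The matrix of operators `∂_Z̄`, entrywise. -/
noncomputable def DZbarop : Fin 2 → Fin 2 → (ℂ → ℂ → ℂ → ℂ) → (ℂ → ℂ → ℂ → ℂ) :=
  fun i j F =>
    if i = 0 then
      (if j = 0 then dTauBar F else fun τ z τ' => (1 / 2) * dZvarBar F τ z τ')
    else
      (if j = 0 then (fun τ z τ' => (1 / 2) * dZvarBar F τ z τ') else dTauPBar F)

/-- `Y = Im Z = (y, v; v, y')`. -/
noncomputable def Ymat (τ z τ' : ℂ) : Matrix (Fin 2) (Fin 2) ℝ :=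
  !![τ.im, z.im; z.im, τ'.im]

/-- The `(i,j)` entry of the matrix-valued Laplace operator
`Ω_{α,β} = -4 Y ᵗ(Y ∂_Z̄) ∂_Z - 2iβ Y ∂_Z + 2iα Y ∂_Z̄` applied to `F`. -/
noncomputable def OmegaEntry (α β : ℂ) (F : ℂ → ℂ → ℂ → ℂ) (i j : Fin 2)
    (τ z τ' : ℂ) : ℂ :=
  (-4) * ∑ a : Fin 2, ((Ymat τ z τ' i a : ℝ) : ℂ) *
      (∑ c : Fin 2, ∑ d : Fin 2, ((Ymat τ z τ' c d : ℝ) : ℂ) *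
        DZbarop d a (DZop c j F) τ z τ')
    - 2 * Complex.I * β * ∑ a : Fin 2, ((Ymat τ z τ' i a : ℝ) : ℂ) * DZop a j F τ z τ'
    + 2 * Complex.I * α * ∑ a : Fin 2, ((Ymat τ z τ' i a : ℝ) : ℂ) * DZbarop a j F τ z τ'

noncomputable def detY (τ z τ' : ℂ) : ℝ := τ.im * τ'.im - z.im ^ 2

open Complex Filter Topology

theorem wD_eq_of_eventuallyEq_im {f : ℂ → ℂ} {φ : ℝ → ℂ} {w c : ℂ}
    (hf : f =ᶠ[𝓝 w] fun u => φ u.im) (hφ : HasDerivAt φ c w.im) :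
    wD f w = -(I / 2) * c := by
  have hφ' : HasFDerivAt (fun u : ℂ => φ u.im) _ w := hφ.hasFDerivAt.comp w imCLM.hasFDerivAt
  rw [wD, hf.fderiv_eq, hφ'.fderiv]
  simp
  ring

theorem wDbar_eq_of_eventuallyEq_im {f : ℂ → ℂ} {φ : ℝ → ℂ} {w c : ℂ}
    (hf : f =ᶠ[𝓝 w] fun u => φ u.im) (hφ : HasDerivAt φ c w.im) :
    wDbar f w = I / 2 * c := by
  have hφ' : HasFDerivAt (fun u : ℂ => φ u.im) _ w := hφ.hasFDerivAt.comp w imCLM.hasFDerivAt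
  rw [wDbar, hf.fderiv_eq, hφ'.fderiv]
  simp
  ring

theorem HasDerivAt.ofReal_cpow_const {g : ℝ → ℝ} {g' x : ℝ} (hg : HasDerivAt g g' x)
    (hx : 0 < g x) (s : ℂ) :
    HasDerivAt (fun t => (g t : ℂ) ^ s) (s * (g x : ℂ) ^ (s - 1) * g') x :=
  (hasStrictDerivAt_cpow_const (c := s) (ofReal_mem_slitPlane.2 hx)).hasDerivAt.comp
    (h := fun t => (g t : ℂ)) x hg.ofReal_comp

noncomputable def detPow (s : ℂ) (y v y' : ℝ) : ℂ := ((y * y' - v ^ 2 : ℝ) : ℂ) ^ s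

section DetPow

variable {s : ℂ} {y v y' : ℝ}

theorem detPow_eq_mul (h : 0 < y * y' - v ^ 2) (s : ℂ) :
    detPow s y v y' = detPow (s - 1) y v y' * (y * y' - v ^ 2) := by
  conv_lhs => rw [← sub_add_cancel s 1]
  rw [detPow, cpow_add _ _ (ofReal_ne_zero.2 h.ne'), cpow_one, detPow]
  push_cast
  rfl

theorem hasDerivAt_detPow_fst (h : 0 < y * y' - v ^ 2) :
    HasDerivAt (fun t => detPow s t v y') (s * detPow (s - 1) y v y' * y') y := by
  have hD : HasDerivAt (fun t => t * y' - v ^ 2) y' y := by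
    simpa using ((hasDerivAt_id y).mul_const y').sub_const (v ^ 2)
  exact hD.ofReal_cpow_const h s

theorem hasDerivAt_detPow_snd (h : 0 < y * y' - v ^ 2) :
    HasDerivAt (fun t => detPow s y t y') (s * detPow (s - 1) y v y' * (-2 * v)) v := by
  have hD : HasDerivAt (fun t => y * y' - t ^ 2) (-2 * v) v := by
    simpa using (hasDerivAt_pow 2 v).const_sub (y * y')
  exact (hD.ofReal_cpow_const h s).congr_deriv (by rw [detPow]; push_cast; rfl)

theorem hasDerivAt_detPow_thd (h : 0 < y * y' - v ^ 2) :
    HasDerivAt (fun t => detPow s y v t) (s * detPow (s - 1) y v y' * y) y' := by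
  have hD : HasDerivAt (fun t => y * t - v ^ 2) y y' := by
    simpa using ((hasDerivAt_id y').const_mul y).sub_const (v ^ 2)
  exact hD.ofReal_cpow_const h s

end DetPow

def FactorsThroughIm (F : ℂ → ℂ → ℂ → ℂ) (Φ : ℝ → ℝ → ℝ → ℂ) : Prop :=
  ∀ τ z τ', 0 < detY τ z τ' → F τ z τ' = Φ τ.im z.im τ'.im

theorem FactorsThroughIm.const_mul {F : ℂ → ℂ → ℂ → ℂ} {Φ : ℝ → ℝ → ℝ → ℂ}
    (hF : FactorsThroughIm F Φ) (c : ℂ) :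
    FactorsThroughIm (fun τ z τ' => c * F τ z τ') fun y v y' => c * Φ y v y' :=
  fun τ z τ' h => congrArg (c * ·) (hF τ z τ' h)

section Slices

variable {F : ℂ → ℂ → ℂ → ℂ} {Φ : ℝ → ℝ → ℝ → ℂ} {τ z τ' c : ℂ}

theorem eventually_detY_pos_fst (h : 0 < detY τ z τ') : ∀ᶠ w in 𝓝 τ, 0 < detY w z τ' :=
  continuousAt_const.eventually_lt (by unfold detY; fun_prop) h

theorem eventually_detY_pos_snd (h : 0 < detY τ z τ') : ∀ᶠ w in 𝓝 z, 0 < detY τ w τ' :=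
  continuousAt_const.eventually_lt (by unfold detY; fun_prop) h

theorem eventually_detY_pos_thd (h : 0 < detY τ z τ') : ∀ᶠ w in 𝓝 τ', 0 < detY τ z w :=
  continuousAt_const.eventually_lt (by unfold detY; fun_prop) h


theorem dTau_eq_of_hasDerivAt (hF : FactorsThroughIm F Φ) (h : 0 < detY τ z τ')
    (hΦ : HasDerivAt (fun t => Φ t z.im τ'.im) c τ.im) : dTau F τ z τ' = -(I / 2) * c :=
  wD_eq_of_eventuallyEq_im ((eventually_detY_pos_fst h).mono fun w hw => hF w z τ' hw) hΦ

theorem dTauBar_eq_of_hasDerivAt (hF : FactorsThroughIm F Φ) (h : 0 < detY τ z τ')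
    (hΦ : HasDerivAt (fun t => Φ t z.im τ'.im) c τ.im) : dTauBar F τ z τ' = I / 2 * c :=
  wDbar_eq_of_eventuallyEq_im ((eventually_detY_pos_fst h).mono fun w hw => hF w z τ' hw) hΦ

theorem dZvar_eq_of_hasDerivAt (hF : FactorsThroughIm F Φ) (h : 0 < detY τ z τ')
    (hΦ : HasDerivAt (fun t => Φ τ.im t τ'.im) c z.im) : dZvar F τ z τ' = -(I / 2) * c :=
  wD_eq_of_eventuallyEq_im ((eventually_detY_pos_snd h).mono fun w hw => hF τ w τ' hw) hΦ

theorem dZvarBar_eq_of_hasDerivAt (hF : FactorsThroughIm F Φ) (h : 0 < detY τ z τ')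
    (hΦ : HasDerivAt (fun t => Φ τ.im t τ'.im) c z.im) : dZvarBar F τ z τ' = I / 2 * c :=
  wDbar_eq_of_eventuallyEq_im ((eventually_detY_pos_snd h).mono fun w hw => hF τ w τ' hw) hΦ

theorem dTauP_eq_of_hasDerivAt (hF : FactorsThroughIm F Φ) (h : 0 < detY τ z τ')
    (hΦ : HasDerivAt (fun t => Φ τ.im z.im t) c τ'.im) : dTauP F τ z τ' = -(I / 2) * c :=
  wD_eq_of_eventuallyEq_im ((eventually_detY_pos_thd h).mono fun w hw => hF τ z w hw) hΦ

theorem dTauPBar_eq_of_hasDerivAt (hF : FactorsThroughIm F Φ) (h : 0 < detY τ z τ')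
    (hΦ : HasDerivAt (fun t => Φ τ.im z.im t) c τ'.im) : dTauPBar F τ z τ' = I / 2 * c :=
  wDbar_eq_of_eventuallyEq_im ((eventually_detY_pos_thd h).mono fun w hw => hF τ z w hw) hΦ

end Slices

noncomputable def detYPow (s : ℂ) : ℂ → ℂ → ℂ → ℂ := fun τ z τ' => ((detY τ z τ' : ℝ) : ℂ) ^ s

section DetYPow

variable {s : ℂ}

theorem factorsThroughIm_detYPow : FactorsThroughIm (detYPow s) (detPow s) :=
  fun _ _ _ _ => rfl

theorem factorsThroughIm_dTau_detYPow :
    FactorsThroughIm (dTau (detYPow s))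
      fun y v y' => -(I / 2) * (s * detPow (s - 1) y v y' * y') :=
  fun _ _ _ h => dTau_eq_of_hasDerivAt factorsThroughIm_detYPow h (hasDerivAt_detPow_fst h)

theorem factorsThroughIm_dTauBar_detYPow :
    FactorsThroughIm (dTauBar (detYPow s))
      fun y v y' => I / 2 * (s * detPow (s - 1) y v y' * y') :=
  fun _ _ _ h => dTauBar_eq_of_hasDerivAt factorsThroughIm_detYPow h (hasDerivAt_detPow_fst h)

theorem factorsThroughIm_dZvar_detYPow :
    FactorsThroughIm (dZvar (detYPow s))
      fun y v y' => -(I / 2) * (s * detPow (s - 1) y v y' * (-2 * v)) :=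
  fun _ _ _ h => dZvar_eq_of_hasDerivAt factorsThroughIm_detYPow h (hasDerivAt_detPow_snd h)

theorem factorsThroughIm_dZvarBar_detYPow :
    FactorsThroughIm (dZvarBar (detYPow s))
      fun y v y' => I / 2 * (s * detPow (s - 1) y v y' * (-2 * v)) :=
  fun _ _ _ h => dZvarBar_eq_of_hasDerivAt factorsThroughIm_detYPow h (hasDerivAt_detPow_snd h)

theorem factorsThroughIm_dTauP_detYPow :
    FactorsThroughIm (dTauP (detYPow s))
      fun y v y' => -(I / 2) * (s * detPow (s - 1) y v y' * y) :=
  fun _ _ _ h => dTauP_eq_of_hasDerivAt factorsThroughIm_detYPow h (hasDerivAt_detPow_thd h)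

theorem factorsThroughIm_dTauPBar_detYPow :
    FactorsThroughIm (dTauPBar (detYPow s))
      fun y v y' => I / 2 * (s * detPow (s - 1) y v y' * y) :=
  fun _ _ _ h => dTauPBar_eq_of_hasDerivAt factorsThroughIm_detYPow h (hasDerivAt_detPow_thd h)

variable {τ z τ' : ℂ}

theorem dTauBar_dTau_detYPow (h : 0 < detY τ z τ') :
    dTauBar (dTau (detYPow s)) τ z τ' =
      s * (s - 1) / 4 * detPow (s - 1 - 1) τ.im z.im τ'.im * τ'.im ^ 2 := by
  rw [dTauBar_eq_of_hasDerivAt factorsThroughIm_dTau_detYPow h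
    ((((hasDerivAt_detPow_fst h).const_mul s).mul_const _).const_mul _)]
  ring_nf
  simp only [I_sq]
  ring

theorem dTauBar_halfDZvar_detYPow (h : 0 < detY τ z τ') :
    dTauBar (fun τ z τ' => 1 / 2 * dZvar (detYPow s) τ z τ') τ z τ' =
      -(s * (s - 1) / 4) * detPow (s - 1 - 1) τ.im z.im τ'.im * z.im * τ'.im := by
  rw [dTauBar_eq_of_hasDerivAt (factorsThroughIm_dZvar_detYPow.const_mul (1 / 2)) h
    ((((((hasDerivAt_detPow_fst h).const_mul s).mul_const _).const_mul _).const_mul _))]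
  ring_nf
  simp only [I_sq]
  ring

theorem dTauBar_dTauP_detYPow (h : 0 < detY τ z τ') :
    dTauBar (dTauP (detYPow s)) τ z τ' =
      s / 4 * ((s - 1) * detPow (s - 1 - 1) τ.im z.im τ'.im * τ.im * τ'.im +
        detPow (s - 1) τ.im z.im τ'.im) := by
  rw [dTauBar_eq_of_hasDerivAt factorsThroughIm_dTauP_detYPow h
    ((((hasDerivAt_detPow_fst h).const_mul s).mul (hasDerivAt_id' _).ofReal_comp).const_mul _)]
  ring_nf
  simp only [I_sq, ofReal_one]
  ring

theorem dZvarBar_dTau_detYPow (h : 0 < detY τ z τ') :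
    dZvarBar (dTau (detYPow s)) τ z τ' =
      -(s * (s - 1) / 2) * detPow (s - 1 - 1) τ.im z.im τ'.im * z.im * τ'.im := by
  rw [dZvarBar_eq_of_hasDerivAt factorsThroughIm_dTau_detYPow h
    ((((hasDerivAt_detPow_snd h).const_mul s).mul_const _).const_mul _)]
  ring_nf
  simp only [I_sq]
  ring

theorem dZvarBar_halfDZvar_detYPow (h : 0 < detY τ z τ') :
    dZvarBar (fun τ z τ' => 1 / 2 * dZvar (detYPow s) τ z τ') τ z τ' =
      s * (s - 1) / 2 * detPow (s - 1 - 1) τ.im z.im τ'.im * z.im ^ 2 -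
        s / 4 * detPow (s - 1) τ.im z.im τ'.im := by
  rw [dZvarBar_eq_of_hasDerivAt (factorsThroughIm_dZvar_detYPow.const_mul (1 / 2)) h
    (((((hasDerivAt_detPow_snd h).const_mul s).mul
      ((hasDerivAt_id' _).ofReal_comp.const_mul (-2))).const_mul _).const_mul _)]
  ring_nf
  simp only [I_sq, ofReal_one]
  ring

theorem dZvarBar_dTauP_detYPow (h : 0 < detY τ z τ') :
    dZvarBar (dTauP (detYPow s)) τ z τ' =
      -(s * (s - 1) / 2) * detPow (s - 1 - 1) τ.im z.im τ'.im * τ.im * z.im := by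
  rw [dZvarBar_eq_of_hasDerivAt factorsThroughIm_dTauP_detYPow h
    ((((hasDerivAt_detPow_snd h).const_mul s).mul_const _).const_mul _)]
  ring_nf
  simp only [I_sq]
  ring

theorem dTauPBar_dTau_detYPow (h : 0 < detY τ z τ') :
    dTauPBar (dTau (detYPow s)) τ z τ' =
      s / 4 * ((s - 1) * detPow (s - 1 - 1) τ.im z.im τ'.im * τ.im * τ'.im +
        detPow (s - 1) τ.im z.im τ'.im) := by
  rw [dTauPBar_eq_of_hasDerivAt factorsThroughIm_dTau_detYPow h
    ((((hasDerivAt_detPow_thd h).const_mul s).mul (hasDerivAt_id' _).ofReal_comp).const_mul _)]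
  ring_nf
  simp only [I_sq, ofReal_one]
  ring

theorem dTauPBar_halfDZvar_detYPow (h : 0 < detY τ z τ') :
    dTauPBar (fun τ z τ' => 1 / 2 * dZvar (detYPow s) τ z τ') τ z τ' =
      -(s * (s - 1) / 4) * detPow (s - 1 - 1) τ.im z.im τ'.im * τ.im * z.im := by
  rw [dTauPBar_eq_of_hasDerivAt (factorsThroughIm_dZvar_detYPow.const_mul (1 / 2)) h
    ((((((hasDerivAt_detPow_thd h).const_mul s).mul_const _).const_mul _).const_mul _))]
  ring_nf
  simp only [I_sq]
  ring

theorem dTauPBar_dTauP_detYPow (h : 0 < detY τ z τ') :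
    dTauPBar (dTauP (detYPow s)) τ z τ' =
      s * (s - 1) / 4 * detPow (s - 1 - 1) τ.im z.im τ'.im * τ.im ^ 2 := by
  rw [dTauPBar_eq_of_hasDerivAt factorsThroughIm_dTauP_detYPow h
    ((((hasDerivAt_detPow_thd h).const_mul s).mul_const _).const_mul _)]
  ring_nf
  simp only [I_sq]
  ring

theorem omegaEntry_detYPow (α β : ℂ) (i j : Fin 2) (h : 0 < detY τ z τ') :
    OmegaEntry α β (detYPow s) i j τ z τ' =
      -s * (s - 3 / 2 + α + β) * ((detY τ z τ' : ℝ) : ℂ) ^ s * if i = j then 1 else 0 := by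
  have hD : (0 : ℝ) < τ.im * τ'.im - z.im ^ 2 := h
  change _ = _ * detPow s τ.im z.im τ'.im * _
  fin_cases i <;> fin_cases j <;>
    simp only [OmegaEntry, DZop, DZbarop, Ymat, Fin.sum_univ_two, Matrix.of_apply,
      Matrix.cons_val', Matrix.cons_val_zero, Matrix.cons_val_one, Matrix.empty_val',
      Matrix.cons_val_fin_one, Fin.isValue, reduceIte, Fin.zero_eta, Fin.mk_one, one_ne_zero,
      zero_ne_one, factorsThroughIm_dTau_detYPow τ z τ' h, factorsThroughIm_dZvar_detYPow τ z τ' h,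
      factorsThroughIm_dTauP_detYPow τ z τ' h, factorsThroughIm_dTauBar_detYPow τ z τ' h,
      factorsThroughIm_dZvarBar_detYPow τ z τ' h, factorsThroughIm_dTauPBar_detYPow τ z τ' h,
      dTauBar_dTau_detYPow h, dTauBar_halfDZvar_detYPow h, dTauBar_dTauP_detYPow h,
      dZvarBar_dTau_detYPow h, dZvarBar_halfDZvar_detYPow h, dZvarBar_dTauP_detYPow h,
      dTauPBar_dTau_detYPow h, dTauPBar_halfDZvar_detYPow h, dTauPBar_dTauP_detYPow h,
      detPow_eq_mul hD s, detPow_eq_mul hD (s - 1)] <;>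
    ring_nf <;>
    simp only [I_sq] <;>
    ring

end DetYPow

/-- `Ω_{1/2, k-1/2}((det Y)^s) = -s(s - (3/2 - k))(det Y)^s I₂` on `ℍ₂`;
in particular `(det Y)^s ∈ ker Ω_{1/2, k-1/2}` iff `s = 0` or `s = 3/2 - k`. -/
theorem stmt1 (k : ℤ) (s : ℂ) :
    (∀ i j : Fin 2, ∀ τ z τ' : ℂ, 0 < τ.im → 0 < detY τ z τ' →
        OmegaEntry (1 / 2) ((k : ℂ) - 1 / 2)
            (fun a b c => ((detY a b c : ℝ) : ℂ) ^ s) i j τ z τ'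
          = -s * (s - (3 / 2 - (k : ℂ))) * ((detY τ z τ' : ℝ) : ℂ) ^ s *
              (if i = j then 1 else 0)) ∧
    ((∀ i j : Fin 2, ∀ τ z τ' : ℂ, 0 < τ.im → 0 < detY τ z τ' →
        OmegaEntry (1 / 2) ((k : ℂ) - 1 / 2)
            (fun a b c => ((detY a b c : ℝ) : ℂ) ^ s) i j τ z τ' = 0)
      ↔ (s = 0 ∨ s = 3 / 2 - (k : ℂ))) := by
  have hΩ (i j : Fin 2) {τ z τ' : ℂ} (h : 0 < detY τ z τ') :
      OmegaEntry (1 / 2) ((k : ℂ) - 1 / 2) (detYPow s) i j τ z τ' =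
        -s * (s - (3 / 2 - (k : ℂ))) * ((detY τ z τ' : ℝ) : ℂ) ^ s *
          (if i = j then 1 else 0) := by
    rw [omegaEntry_detYPow _ _ i j h]
    ring
  refine ⟨fun i j _ _ _ _ h => hΩ i j h, fun hker => ?_, fun hs i j _ _ _ _ h => ?_⟩
  · have hI : detY I 0 I = 1 := by simp [detY]
    have hpos : 0 < detY I 0 I := hI ▸ one_pos
    have := (hΩ 0 0 hpos).symm.trans (hker 0 0 I 0 I (by simp) hpos)
    simpa [hI, sub_eq_zero] using this
  · refine (hΩ i j h).trans ?_
    rcases hs with rfl | rfl <;> ring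
end

section
/- Let $k < 0$ be an integer. The ratio of the coefficient of $v^n$ in the power series expansion of $(\tfrac{v}{4})^{\frac32 - k}\,{}_2F_3\big(1, 2-k; \tfrac52 - k, 2 - \tfrac{k}{2}, \tfrac{5-k}{2}; \tfrac{v}{4}\big)$ to the coefficient of $v^n$ in the power series expansion of $(\tfrac{v}{4})^{-\frac{k}{2}}\,{}_1F_2\big(\tfrac{1-k}{2}; \tfrac12, 1 - \tfrac{k}{2}; \tfrac{v}{4}\big)$ tends to zero as $n \to \infty$. (Here the series in the numerator contributes only to half-integer-shifted powers; interpret both as series in $v^{1/2}$, comparing coefficients of the same power $v^n$ along the arithmetic progression where both are nonzero, or equivalently compare the coefficient sequences after reindexing so that both series are indexed by $n$.) -/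
open Filter

/-- The `n`-th Taylor coefficient of the generalized hypergeometric series
`ₚF_q(a; b; v) = Σₙ (a₁)ₙ⋯(aₚ)ₙ / ((b₁)ₙ⋯(b_q)ₙ n!) vⁿ`. -/
noncomputable def hypCoeffR {p q : ℕ} (a : Fin p → ℝ) (b : Fin q → ℝ) (n : ℕ) : ℝ :=
  (∏ i, (ascPochhammer ℝ n).eval (a i)) /
    ((∏ j, (ascPochhammer ℝ n).eval (b j)) * (n.factorial : ℝ))

/-! After the factorials cancel, the ratio of the two coefficients is, up to a constant, a product
of Pochhammer quotients `(a)ₙ / (b)ₙ` with `0 ≤ a ≤ b`, each lying in `[0, 1]`, times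
`(1 - k/2)ₙ / (2 - k/2)ₙ = (1 - k/2) / (1 - k/2 + n)`, which tends to `0`. -/

open Polynomial

theorem ascPochhammer_eval_mul_add_natCast {S : Type*} [CommSemiring S] (n : ℕ) (a : S) :
    (ascPochhammer S n).eval a * (a + n) = a * (ascPochhammer S n).eval (a + 1) := by
  rw [← ascPochhammer_succ_eval, ascPochhammer_succ_left, eval_mul, eval_comp]
  simp

theorem ascPochhammer_eval_nonneg {S : Type*} [Semiring S] [PartialOrder S]
    [IsStrictOrderedRing S] (n : ℕ) {s : S} (hs : 0 ≤ s) : 0 ≤ (ascPochhammer S n).eval s := by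
  induction n with
  | zero => simp
  | succ n ih =>
    rw [ascPochhammer_succ_eval]
    exact mul_nonneg ih (add_nonneg hs n.cast_nonneg)

theorem monotoneOn_ascPochhammer_eval {S : Type*} [Semiring S] [PartialOrder S]
    [IsStrictOrderedRing S] (n : ℕ) : MonotoneOn (ascPochhammer S n).eval (Set.Ici 0) := by
  induction n with
  | zero => simp [monotoneOn_const]
  | succ n ih =>
    intro a ha b hb hab
    simp_rw [ascPochhammer_succ_eval]
    exact mul_le_mul (ih ha hb hab) (add_le_add_left hab _)
      (add_nonneg ha n.cast_nonneg) (ascPochhammer_eval_nonneg n hb)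

section OrderedField

variable {𝕜 : Type*} [Field 𝕜] [LinearOrder 𝕜] [IsStrictOrderedRing 𝕜]

theorem ascPochhammer_eval_div_eval_add_one {a : 𝕜} (ha : 0 < a) (n : ℕ) :
    (ascPochhammer 𝕜 n).eval a / (ascPochhammer 𝕜 n).eval (a + 1) = a / (a + n) := by
  have := ascPochhammer_pos n (a + 1) (by linarith)
  rw [div_eq_div_iff this.ne' (by positivity), ascPochhammer_eval_mul_add_natCast]

theorem ascPochhammer_eval_div_mem_Icc {a b : 𝕜} (ha : 0 ≤ a) (hab : a ≤ b) (n : ℕ) :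
    (ascPochhammer 𝕜 n).eval a / (ascPochhammer 𝕜 n).eval b ∈ Set.Icc 0 1 :=
  ⟨div_nonneg (ascPochhammer_eval_nonneg n ha) (ascPochhammer_eval_nonneg n (ha.trans hab)),
    div_le_one_of_le₀ (monotoneOn_ascPochhammer_eval n ha (ha.trans hab) hab)
      (ascPochhammer_eval_nonneg n (ha.trans hab))⟩

end OrderedField

theorem hypCoeffR_div_hypCoeffR_eq {c : ℝ} (hc : c < 1) (n : ℕ) :
    hypCoeffR ![1, 2 - c] ![5 / 2 - c, 2 - c / 2, (5 - c) / 2] n /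
        hypCoeffR ![(1 - c) / 2] ![1 / 2, 1 - c / 2] n =
      (ascPochhammer ℝ n).eval (2 - c) / (ascPochhammer ℝ n).eval (5 / 2 - c) *
        ((ascPochhammer ℝ n).eval (1 / 2) / (ascPochhammer ℝ n).eval ((1 - c) / 2)) *
        ((ascPochhammer ℝ n).eval 1 / (ascPochhammer ℝ n).eval ((5 - c) / 2)) *
        ((ascPochhammer ℝ n).eval (1 - c / 2) / (ascPochhammer ℝ n).eval (2 - c / 2)) := by
  have pos : ∀ a : ℝ, 0 < a → (ascPochhammer ℝ n).eval a ≠ 0 :=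
    fun a ha => (ascPochhammer_pos n a ha).ne'
  have := pos (5 / 2 - c) (by linarith)
  have := pos (2 - c / 2) (by linarith)
  have := pos ((5 - c) / 2) (by linarith)
  have := pos ((1 - c) / 2) (by linarith)
  have := pos (1 / 2) (by norm_num)
  have := pos (1 - c / 2) (by linarith)
  have : (n.factorial : ℝ) ≠ 0 := by positivity
  simp only [hypCoeffR, Fin.prod_univ_succ, Fin.prod_univ_zero, Matrix.cons_val_zero,
    Matrix.cons_val_succ, ascPochhammer_eval_one]
  field_simp

theorem tendsto_hypCoeffR_div_hypCoeffR {c : ℝ} (hc : c ≤ 0) :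
    Tendsto (fun n => hypCoeffR ![1, 2 - c] ![5 / 2 - c, 2 - c / 2, (5 - c) / 2] n /
      hypCoeffR ![(1 - c) / 2] ![1 / 2, 1 - c / 2] n) atTop (nhds 0) := by
  have ha : 0 < 1 - c / 2 := by linarith
  simp only [hypCoeffR_div_hypCoeffR_eq (by linarith : c < 1)]
  simp only [show 2 - c / 2 = 1 - c / 2 + 1 by ring, ascPochhammer_eval_div_eval_add_one ha]
  refine squeeze_zero (g := fun n : ℕ => (1 - c / 2) / (1 - c / 2 + n)) (fun n => ?_) (fun n => ?_)
    (tendsto_const_nhds.div_atTop (tendsto_atTop_add_const_left _ _ tendsto_natCast_atTop_atTop))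
  all_goals
    obtain ⟨h₁, h₁'⟩ := ascPochhammer_eval_div_mem_Icc (by linarith : (0 : ℝ) ≤ 2 - c)
      (by linarith : 2 - c ≤ 5 / 2 - c) n
    obtain ⟨h₂, h₂'⟩ := ascPochhammer_eval_div_mem_Icc (by norm_num : (0 : ℝ) ≤ 1 / 2)
      (by linarith : 1 / 2 ≤ (1 - c) / 2) n
    obtain ⟨h₃, h₃'⟩ := ascPochhammer_eval_div_mem_Icc zero_le_one
      (by linarith : 1 ≤ (5 - c) / 2) n
  · positivity
  · exact mul_le_of_le_one_left (by positivity) (mul_le_one₀ (mul_le_one₀ h₁' h₂ h₂') h₃ h₃')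

/-- for an integer `k < 0`, the ratio of the `n`-th coefficient (in `v`,
after reindexing both series by `n`) of
`(v/4)^{3/2-k} ₂F₃(1, 2-k; 5/2-k, 2-k/2, (5-k)/2; v/4)`
to the `n`-th coefficient of
`(v/4)^{-k/2} ₁F₂((1-k)/2; 1/2, 1-k/2; v/4)`
tends to zero as `n → ∞`.  (The `n`-th coefficient of the first series is
`4^{-(3/2-k)} · c_n · 4^{-n}` and of the second `4^{k/2} · d_n · 4^{-n}`.) -/
theorem stmt10 (k : ℤ) (hk : k < 0) :
    Tendsto (fun n : ℕ =>
        ((4 : ℝ) ^ (-(3 / 2 - (k : ℝ))) *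
            hypCoeffR ![1, 2 - (k : ℝ)]
              ![5 / 2 - (k : ℝ), 2 - (k : ℝ) / 2, (5 - (k : ℝ)) / 2] n * (4 : ℝ)⁻¹ ^ n) /
          ((4 : ℝ) ^ ((k : ℝ) / 2) *
            hypCoeffR ![(1 - (k : ℝ)) / 2] ![1 / 2, 1 - (k : ℝ) / 2] n * (4 : ℝ)⁻¹ ^ n))
      atTop (nhds 0) := by
  have hq : ∀ n : ℕ, (4 : ℝ)⁻¹ ^ n ≠ 0 := fun n => by positivity
  simp only [mul_div_mul_right _ _ (hq _), mul_div_mul_comm]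
  simpa using (tendsto_hypCoeffR_div_hypCoeffR (Int.cast_nonpos.mpr hk.le)).const_mul
    ((4 : ℝ) ^ (-(3 / 2 - (k : ℝ))) / (4 : ℝ) ^ ((k : ℝ) / 2))
end

section
/- Suppose a sequence of Laurent polynomials $l_n \in \mathbb{C}[u, u^{-1}]$ satisfies a recursion $l_{n+1} = \sum_{d=0}^{D} p_{n,d}\, l_n^{(d)}$, where $l_n^{(d)}$ denotes the $d$-th derivative, $p_{n,d} \in \mathbb{C}[u, u^{-1}]$ with $\deg_u p_{n,0} = 0$ and $\deg_u p_{n,d} < d$ for $d \ne 0$, the valuations of all $p_{n,d}$ are uniformly bounded below, and $(n|V|)^d\, p_{n,d}$ has uniformly bounded coefficients as $n \to \infty$ (where $V$ is a lower bound on $\mathrm{val}_u(p_{n,d}) - d$). Then: (i) $\deg_u l_n \le \deg_u l_0$ for all $n$; (ii) $\mathrm{val}_u l_n \ge \mathrm{val}_u l_0 + nV$; (iii) there exist constants $B, b \ge 1$ such that every coefficient of $l_n$ has absolute value at most $B\, b^n$; consequently, with $\kappa := 2b$, the formal Laurent series $\sum_{n=0}^\infty l_n(u)\,(u/\kappa)^n$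 is well-defined (each coefficient is a convergent sum) and has all coefficients bounded in absolute value by $2B$. -/
/-!
Differentiating `d` times and multiplying by `p_{n,d}`, whose support lies in `[V + d, d]`, moves
the support of a Laurent polynomial down by at most `-V` and never up; this gives the degree and
valuation bounds. On the window `[Vl + nV, Dl]` containing the support of `lₙ`, a `d`-th derivative
multiplies coefficients by at most `(A + n|V|)^d` for a constant `A ≥ 1`, and
`A + n|V| ≤ 2A · max 1 (n|V|)` turns the hypothesis on `(n|V|)^d p_{n,d}` into a bound on
`‖p_{n,d}‖ (A + n|V|)^d` that is uniform in `n`. So one step of the recursion multiplies the largest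
coefficient by at most a fixed `b`, and the coefficients of the series are dominated by `B ∑ 2⁻ⁿ`.
-/

/-- Derivative of a Laurent polynomial given by its coefficient function:
`(D p)_j = (j+1) p_{j+1}`. -/
noncomputable def lderiv (p : ℤ → ℂ) : ℤ → ℂ := fun j => ((j + 1 : ℤ) : ℂ) * p (j + 1)

/-- Product of two Laurent polynomials given by their coefficient functions. -/
noncomputable def lmul (p q : ℤ → ℂ) : ℤ → ℂ := fun j => ∑' i : ℤ, p i * q (j - i)

open Finset

lemma lderiv_iterate_apply (d : ℕ) (q : ℤ → ℂ) (k : ℤ) :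
    lderiv^[d] q k = (∏ m ∈ range d, ((k + m + 1 : ℤ) : ℂ)) * q (k + d) := by
  induction d generalizing q k with
  | zero => simp
  | succ d ih =>
    rw [Function.iterate_succ_apply, ih, lderiv, prod_range_succ]
    push_cast
    ring_nf

lemma lderiv_iterate_apply_eq_zero {q : ℤ → ℂ} {d : ℕ} {k : ℤ} (hq : q (k + d) = 0) :
    lderiv^[d] q k = 0 := by
  rw [lderiv_iterate_apply, hq, mul_zero]

lemma lmul_eq_zero {p q : ℤ → ℂ} {j : ℤ} (h : ∀ i, p i = 0 ∨ q (j - i) = 0) :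
    lmul p q j = 0 :=
  (tsum_congr fun i => mul_eq_zero.2 (h i)).trans tsum_zero

lemma lmul_eq_sum {p : ℤ → ℂ} {s : Finset ℤ} (hp : ∀ i ∉ s, p i = 0) (q : ℤ → ℂ) (j : ℤ) :
    lmul p q j = ∑ i ∈ s, p i * q (j - i) :=
  tsum_eq_sum fun i hi => by rw [hp i hi, zero_mul]

noncomputable def diffOp (p : ℕ → ℤ → ℂ) (D : ℕ) (q : ℤ → ℂ) : ℤ → ℂ :=
  fun j => ∑ d ∈ range (D + 1), lmul (p d) (lderiv^[d] q) j

section diffOp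

variable {p : ℕ → ℤ → ℂ} {D : ℕ} {q : ℤ → ℂ}

lemma diffOp_eq_zero_of_lt {a j : ℤ} (hp : ∀ (d : ℕ) j, (d : ℤ) < j → p d j = 0)
    (hq : ∀ k, a < k → q k = 0) (hj : a < j) : diffOp p D q j = 0 :=
  sum_eq_zero fun d _ => lmul_eq_zero fun i =>
    (lt_or_ge (d : ℤ) i).imp (hp d i) fun _ => lderiv_iterate_apply_eq_zero (hq _ (by omega))

lemma diffOp_eq_zero_of_lt_add {V a j : ℤ} (hp : ∀ (d : ℕ) j, j < V + d → p d j = 0)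
    (hq : ∀ k, k < a → q k = 0) (hj : j < a + V) : diffOp p D q j = 0 :=
  sum_eq_zero fun d _ => lmul_eq_zero fun i =>
    (lt_or_ge i (V + d)).imp (hp d i) fun _ => lderiv_iterate_apply_eq_zero (hq _ (by omega))

lemma norm_lderiv_iterate_le {lo hi : ℤ} {L : ℝ} (hlo : ∀ k, k < lo → q k = 0)
    (hhi : ∀ k, hi < k → q k = 0) (hL : ∀ k, ‖q k‖ ≤ L) (d : ℕ) (k : ℤ) :
    ‖lderiv^[d] q k‖ ≤ (|(hi : ℝ)| + |(lo : ℝ)| + d) ^ d * L := by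
  by_cases hk : q (k + d) = 0
  · rw [lderiv_iterate_apply_eq_zero hk, norm_zero]
    exact mul_nonneg (by positivity) ((norm_nonneg _).trans (hL k))
  have hk_lo : lo ≤ k + d := not_lt.1 fun h => hk (hlo _ h)
  have hk_hi : k + d ≤ hi := not_lt.1 fun h => hk (hhi _ h)
  rw [lderiv_iterate_apply, norm_mul, norm_prod]
  refine mul_le_mul ?_ (hL _) (norm_nonneg _) (by positivity)
  refine (prod_le_prod (fun _ _ => norm_nonneg _) fun m hm => ?_).trans_eq
    (by rw [prod_const, card_range])
  have hm : (m : ℤ) < d := by exact_mod_cast mem_range.1 hm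
  have h_upper : ((k + m + 1 : ℤ) : ℝ) ≤ hi := by exact_mod_cast (by omega : k + m + 1 ≤ hi)
  have h_lower : ((lo - d : ℤ) : ℝ) ≤ ((k + m + 1 : ℤ) : ℝ) := by
    exact_mod_cast (by omega : lo - d ≤ k + m + 1)
  rw [Complex.norm_intCast]
  push_cast at h_upper h_lower ⊢
  rw [abs_le]
  constructor <;> linarith [le_abs_self (hi : ℝ), neg_abs_le (lo : ℝ), abs_nonneg (hi : ℝ),
    abs_nonneg (lo : ℝ), Nat.cast_nonneg (α := ℝ) d]

lemma norm_diffOp_le {s : Finset ℤ} {R E L : ℝ} (hs : ∀ d ≤ D, ∀ i ∉ s, p d i = 0)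
    (hE : ∀ d ≤ D, ∀ i, ‖p d i‖ * R ^ d ≤ E) (hq : ∀ d ≤ D, ∀ k, ‖lderiv^[d] q k‖ ≤ R ^ d * L)
    (hL : 0 ≤ L) (j : ℤ) : ‖diffOp p D q j‖ ≤ (D + 1) * #s * E * L := by
  have hterm : ∀ d ≤ D, ‖lmul (p d) (lderiv^[d] q) j‖ ≤ #s * (E * L) := by
    intro d hd
    rw [lmul_eq_sum (hs d hd)]
    refine (norm_sum_le _ _).trans
      ((sum_le_card_nsmul _ _ _ fun i _ => ?_).trans_eq (nsmul_eq_mul _ _))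
    calc ‖p d i * lderiv^[d] q (j - i)‖ ≤ ‖p d i‖ * (R ^ d * L) := by
          rw [norm_mul]; exact mul_le_mul_of_nonneg_left (hq d hd _) (norm_nonneg _)
      _ = ‖p d i‖ * R ^ d * L := by ring
      _ ≤ E * L := mul_le_mul_of_nonneg_right (hE d hd i) hL
  calc ‖diffOp p D q j‖ ≤ ∑ d ∈ range (D + 1), ‖lmul (p d) (lderiv^[d] q) j‖ := norm_sum_le _ _
    _ ≤ (D + 1) • (#s * (E * L)) := by
        simpa using sum_le_card_nsmul _ _ _ fun d hd => hterm d (Nat.lt_succ_iff.1 (mem_range.1 hd))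
    _ = (D + 1) * #s * E * L := by rw [nsmul_eq_mul]; push_cast; ring

end diffOp

lemma norm_le_sum_norm_of_eq_zero {α E : Type*} [SeminormedAddGroup E] {f : α → E} {s : Finset α}
    (hf : ∀ a ∉ s, f a = 0) (a : α) : ‖f a‖ ≤ ∑ x ∈ s, ‖f x‖ := by
  by_cases ha : a ∈ s
  · exact single_le_sum (fun x _ => norm_nonneg (f x)) ha
  · rw [hf a ha, norm_zero]
    exact sum_nonneg fun x _ => norm_nonneg _

lemma add_le_two_mul_mul_max {A x : ℝ} (hA : 1 ≤ A) (hx : 0 ≤ x) : A + x ≤ 2 * A * max 1 x := by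
  rcases le_total x 1 with h | h
  · rw [max_eq_left h]; linarith
  · rw [max_eq_right h]; nlinarith

lemma exists_norm_mul_pow_le {p : ℕ → ℕ → ℤ → ℂ} {D : ℕ} {V : ℤ} {s : Finset ℤ} {A : ℝ}
    (hA : 1 ≤ A) (hs : ∀ n, ∀ d ≤ D, ∀ i ∉ s, p n d i = 0)
    (hpdeg : ∀ (n d : ℕ), d ≠ 0 → ∀ j : ℤ, (d : ℤ) ≤ j → p n d j = 0)
    (hpval : ∀ (n d : ℕ) (j : ℤ), j < V + d → p n d j = 0)
    (hbound : ∃ C : ℝ, ∀ (n d : ℕ) (j : ℤ), (((n : ℤ) * |V| : ℤ) : ℝ) ^ d * ‖p n d j‖ ≤ C) :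
    ∃ E, ∀ n : ℕ, ∀ d ≤ D, ∀ i, ‖p n d i‖ * (A + n * |(V : ℝ)|) ^ d ≤ E := by
  obtain ⟨C, hC⟩ := hbound
  set C₀ := ∑ d ∈ range (D + 1), ∑ i ∈ s, ‖p 0 d i‖
  have hC₀ : ∀ d ≤ D, ∀ i, ‖p 0 d i‖ ≤ C₀ := fun d hd i =>
    (norm_le_sum_norm_of_eq_zero (hs 0 d hd) i).trans <|
      single_le_sum (f := fun d => ∑ i ∈ s, ‖p 0 d i‖)
        (fun _ _ => sum_nonneg fun _ _ => norm_nonneg _) (mem_range.2 (by omega))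
  have hM₀ : 0 ≤ max C C₀ :=
    le_max_of_le_right (sum_nonneg fun _ _ => sum_nonneg fun _ _ => norm_nonneg _)
  have hM : ∀ n : ℕ, ∀ d ≤ D, ∀ i, max 1 (n * |(V : ℝ)|) ^ d * ‖p n d i‖ ≤ max C C₀ := by
    intro n d hd i
    have hC' : (n * |(V : ℝ)|) ^ d * ‖p n d i‖ ≤ C := by simpa using hC n d i
    rcases Nat.eq_zero_or_pos n with rfl | hn
    · simpa using (hC₀ d hd i).trans (le_max_right C C₀)
    rcases eq_or_ne V 0 with rfl | hV
    · rcases eq_or_ne d 0 with rfl | hd₀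
      · simpa using hC'.trans (le_max_left C C₀)
      · have : p n d i = 0 :=
          (lt_or_ge i d).elim (fun h => hpval n d i (by omega)) (hpdeg n d hd₀ i)
        rwa [this, norm_zero, mul_zero]
    · have h1 : 1 ≤ n * |(V : ℝ)| :=
        one_le_mul_of_one_le_of_one_le (by exact_mod_cast hn) (by exact_mod_cast Int.one_le_abs hV)
      rw [max_eq_right h1]
      exact hC'.trans (le_max_left C C₀)
  refine ⟨(2 * A) ^ D * max C C₀, fun n d hd i => ?_⟩
  calc ‖p n d i‖ * (A + n * |(V : ℝ)|) ^ d
      ≤ ‖p n d i‖ * (2 * A * max 1 (n * |(V : ℝ)|)) ^ d := by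
        gcongr
        exact add_le_two_mul_mul_max hA (by positivity)
    _ = (2 * A) ^ d * (max 1 (n * |(V : ℝ)|) ^ d * ‖p n d i‖) := by ring
    _ ≤ (2 * A) ^ D * max C C₀ :=
        mul_le_mul (pow_le_pow_right₀ (by linarith) hd) (hM n d hd i) (by positivity)
          (by positivity)

lemma norm_le_mul_pow_of_forall_norm_le {l : ℕ → ℤ → ℂ} {B b : ℝ} (h0 : ∀ j, ‖l 0 j‖ ≤ B)
    (hstep : ∀ n L, (∀ k, ‖l n k‖ ≤ L) → ∀ j, ‖l (n + 1) j‖ ≤ b * L) (n : ℕ) (j : ℤ) :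
    ‖l n j‖ ≤ B * b ^ n := by
  induction n generalizing j with
  | zero => simpa using h0 j
  | succ n ih => exact (hstep n _ ih j).trans_eq (by ring)

lemma exists_norm_le_mul_pow {l : ℕ → ℤ → ℂ} {p : ℕ → ℕ → ℤ → ℂ} {D : ℕ} {V Dl Vl : ℤ}
    {s : Finset ℤ} {A E : ℝ} (hrec : ∀ n j, l (n + 1) j = diffOp (p n) D (l n) j)
    (hdeg : ∀ n j, Dl < j → l n j = 0) (hval : ∀ (n : ℕ) j, j < Vl + n * V → l n j = 0)
    (hs : ∀ n, ∀ d ≤ D, ∀ i ∉ s, p n d i = 0) (hA : |(Dl : ℝ)| + |(Vl : ℝ)| + D ≤ A)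
    (hE : ∀ n : ℕ, ∀ d ≤ D, ∀ i, ‖p n d i‖ * (A + n * |(V : ℝ)|) ^ d ≤ E) :
    ∃ B b : ℝ, 1 ≤ B ∧ 1 ≤ b ∧ ∀ n j, ‖l n j‖ ≤ B * b ^ n := by
  refine ⟨max 1 (∑ j ∈ Icc Vl Dl, ‖l 0 j‖), max 1 ((D + 1) * #s * E), le_max_left _ _,
    le_max_left _ _, norm_le_mul_pow_of_forall_norm_le (fun j => ?_) fun n L hL j => ?_⟩
  · refine (norm_le_sum_norm_of_eq_zero (fun i hi => ?_) j).trans (le_max_right _ _)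
    rw [mem_Icc, not_and_or, not_le, not_le] at hi
    exact hi.elim (fun h => hval 0 i (by simpa using h)) (hdeg 0 i)
  have hL₀ : 0 ≤ L := (norm_nonneg _).trans (hL 0)
  have hderiv : ∀ d ≤ D, ∀ k, ‖lderiv^[d] (l n) k‖ ≤ (A + n * |(V : ℝ)|) ^ d * L :=
    fun d hd k => (norm_lderiv_iterate_le (hval n) (hdeg n) hL d k).trans <| by
      have habs : |(Vl : ℝ) + n * V| ≤ |(Vl : ℝ)| + n * |(V : ℝ)| :=
        (abs_add_le _ _).trans_eq (by rw [abs_mul, Nat.abs_cast])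
      have hdD : (d : ℝ) ≤ D := by exact_mod_cast hd
      gcongr ?_ ^ _ * _
      push_cast
      linarith
  rw [hrec]
  exact (norm_diffOp_le (hs n) (hE n) hderiv hL₀ j).trans
    (mul_le_mul_of_nonneg_right (le_max_right _ _) hL₀)

lemma summable_div_two_mul_pow_and_tsum_le {a : ℕ → ℝ} {B b : ℝ} (hb : 0 < b)
    (ha₀ : ∀ n, 0 ≤ a n) (ha : ∀ n, a n ≤ B * b ^ n) :
    Summable (fun n => a n / (2 * b) ^ n) ∧ ∑' n, a n / (2 * b) ^ n ≤ 2 * B := by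
  have hle : ∀ n, a n / (2 * b) ^ n ≤ B * (1 / 2) ^ n := fun n => by
    rw [div_le_iff₀ (by positivity)]
    exact (ha n).trans_eq (by rw [mul_assoc, ← mul_pow, one_div, inv_mul_cancel_left₀ two_ne_zero])
  have hgeom := summable_geometric_two.mul_left B
  have hsum : Summable (fun n => a n / (2 * b) ^ n) :=
    Summable.of_nonneg_of_le (fun n => div_nonneg (ha₀ n) (by positivity)) hle hgeom
  refine ⟨hsum, (hsum.tsum_le_tsum hle hgeom).trans_eq ?_⟩
  rw [tsum_mul_left, tsum_geometric_two, mul_comm]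

theorem stmt14_general (l : ℕ → ℤ → ℂ) (p : ℕ → ℕ → ℤ → ℂ) (D : ℕ) (V : ℤ) (Dl Vl : ℤ)
    (hdeg0 : ∀ j : ℤ, Dl < j → l 0 j = 0)
    (hval0 : ∀ j : ℤ, j < Vl → l 0 j = 0)
    (hrec : ∀ n : ℕ, ∀ j : ℤ,
        l (n + 1) j = ∑ d ∈ Finset.range (D + 1), lmul (p n d) (lderiv^[d] (l n)) j)
    (hp0deg : ∀ n : ℕ, ∀ j : ℤ, 0 < j → p n 0 j = 0)
    (hpdeg : ∀ n : ℕ, ∀ d : ℕ, d ≠ 0 → ∀ j : ℤ, (d : ℤ) ≤ j → p n d j = 0)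
    (hpval : ∀ n : ℕ, ∀ d : ℕ, ∀ j : ℤ, j < V + d → p n d j = 0)
    (hbound : ∃ C : ℝ, ∀ n : ℕ, ∀ d : ℕ, ∀ j : ℤ,
        (((n : ℤ) * |V| : ℤ) : ℝ) ^ d * ‖p n d j‖ ≤ C) :
    (∀ n : ℕ, ∀ j : ℤ, Dl < j → l n j = 0) ∧
    (∀ n : ℕ, ∀ j : ℤ, j < Vl + n * V → l n j = 0) ∧
    (∃ B b : ℝ, 1 ≤ B ∧ 1 ≤ b ∧
      (∀ n : ℕ, ∀ j : ℤ, ‖l n j‖ ≤ B * b ^ n) ∧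
      ∀ j : ℤ,
        (Summable fun n : ℕ => ‖l n (j - n)‖ / (2 * b) ^ n) ∧
          (∑' n : ℕ, ‖l n (j - n)‖ / (2 * b) ^ n) ≤ 2 * B) := by
  have hpdeg' : ∀ (n d : ℕ) (j : ℤ), (d : ℤ) < j → p n d j = 0 := fun n d j hj => by
    rcases eq_or_ne d 0 with rfl | hd
    · exact hp0deg n j (by simpa using hj)
    · exact hpdeg n d hd j hj.le
  have hs : ∀ n, ∀ d ≤ D, ∀ i ∉ Icc V (D : ℤ), p n d i = 0 := fun n d hd i hi => by
    rw [mem_Icc, not_and_or, not_le, not_le] at hi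
    exact hi.elim (fun h => hpval n d i (by omega)) (fun h => hpdeg' n d i (by omega))
  have hdeg : ∀ n j, Dl < j → l n j = 0 := by
    intro n
    induction n with
    | zero => exact hdeg0
    | succ n ih => exact fun j hj => (hrec n j).trans (diffOp_eq_zero_of_lt (hpdeg' n) ih hj)
  have hval : ∀ (n : ℕ) j, j < Vl + n * V → l n j = 0 := by
    intro n
    induction n with
    | zero => simpa using hval0
    | succ n ih =>
      exact fun j hj => (hrec n j).trans <|
        diffOp_eq_zero_of_lt_add (hpval n) ih (by push_cast at hj; linarith)
  obtain ⟨E, hE⟩ := exists_norm_mul_pow_le (A := |(Dl : ℝ)| + |(Vl : ℝ)| + D + 1)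
    (le_add_of_nonneg_left (by positivity)) hs hpdeg hpval hbound
  obtain ⟨B, b, hB, hb, hl⟩ :=
    exists_norm_le_mul_pow hrec hdeg hval hs (le_add_of_nonneg_right zero_le_one) hE
  exact ⟨hdeg, hval, B, b, hB, hb, hl, fun j => summable_div_two_mul_pow_and_tsum_le
    (by linarith) (fun n => norm_nonneg _) fun n => hl n _⟩

/-- suppose Laurent polynomials `lₙ` satisfy the recursion
`l_{n+1} = Σ_{d=0}^D p_{n,d} lₙ⁽ᵈ⁾` where `deg p_{n,0} = 0`, `deg p_{n,d} < d` for
`d ≠ 0`, `V` is a lower bound for `val(p_{n,d}) - d`, and `(n|V|)^d p_{n,d}` has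
uniformly bounded coefficients.  Then (i) `deg lₙ ≤ deg l₀`;
(ii) `val lₙ ≥ val l₀ + nV`; (iii) there are `B, b ≥ 1` with `|(lₙ)_j| ≤ B bⁿ`, so
that with `κ = 2b` the formal Laurent series `Σₙ lₙ(u) (u/κ)ⁿ` is well-defined
(each coefficient an absolutely convergent sum) with all coefficients bounded by `2B`. -/
theorem stmt14 (l : ℕ → ℤ → ℂ) (p : ℕ → ℕ → ℤ → ℂ) (D : ℕ) (V : ℤ) (Dl Vl : ℤ)
    (hdeg0 : ∀ j : ℤ, Dl < j → l 0 j = 0)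
    (hval0 : ∀ j : ℤ, j < Vl → l 0 j = 0)
    (hrec : ∀ n : ℕ, ∀ j : ℤ,
        l (n + 1) j = ∑ d ∈ Finset.range (D + 1), lmul (p n d) (lderiv^[d] (l n)) j)
    (hp0deg : ∀ n : ℕ, ∀ j : ℤ, 0 < j → p n 0 j = 0)
    (hp0lead : ∀ n : ℕ, p n 0 0 ≠ 0)
    (hpdeg : ∀ n : ℕ, ∀ d : ℕ, d ≠ 0 → ∀ j : ℤ, (d : ℤ) ≤ j → p n d j = 0)
    (hpval : ∀ n : ℕ, ∀ d : ℕ, ∀ j : ℤ, j < V + d → p n d j = 0)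
    (hbound : ∃ C : ℝ, ∀ n : ℕ, ∀ d : ℕ, ∀ j : ℤ,
        (((n : ℤ) * |V| : ℤ) : ℝ) ^ d * ‖p n d j‖ ≤ C) :
    (∀ n : ℕ, ∀ j : ℤ, Dl < j → l n j = 0) ∧
    (∀ n : ℕ, ∀ j : ℤ, j < Vl + n * V → l n j = 0) ∧
    (∃ B b : ℝ, 1 ≤ B ∧ 1 ≤ b ∧
      (∀ n : ℕ, ∀ j : ℤ, ‖l n j‖ ≤ B * b ^ n) ∧
      ∀ j : ℤ,
        (Summable fun n : ℕ => ‖l n (j - n)‖ / (2 * b) ^ n) ∧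
          (∑' n : ℕ, ‖l n (j - n)‖ / (2 * b) ^ n) ≤ 2 * B) :=
  stmt14_general l p D V Dl Vl hdeg0 hval0 hrec hp0deg hpdeg hpval hbound
end
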